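/- For every m ≥ 2, all indices i_1, …, i_m ∈ {1,…,n}, and every permutation π of {1,…,m}: r_{i_{π(1)} i_{π(2)} ⋯ i_{π(m)}} = sgn(π) · r_{i_1 i_2 ⋯ i_m} in V^{⊗m}. -/

import Mathlib

open scoped TensorProduct
open PiTensorProduct

namespace OrePaper

variable (k : Type*) [Field k] (V : Type*) [AddCommGroup V] [Module k V]

/-- The canonical isomorphism `V^{⊗a} ⊗ V^{⊗b} ≃ V^{⊗(a+b)}`. -/
noncomputable abbrev mulPow (a b : ℕ) :
    ((⨂[k]^a V) ⊗[k] (⨂[k]^b V)) ≃ₗ[k] ⨂[k]^(a+b) V :=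
  TensorPower.mulEquiv

variable {k V}

/-- Identification of `V` with `V^{⊗1}`. -/
noncomputable def toPow1 : V ≃ₗ[k] ⨂[k]^1 V :=
  (PiTensorProduct.subsingletonEquiv (s := fun _ : Fin 1 => V) (0 : Fin 1)).symm

/-- `w ⊗ v ∈ V^{⊗(m+1)}` for `w ∈ V^{⊗m}`, `v ∈ V`. -/
noncomputable def append {m : ℕ} (w : ⨂[k]^m V) (v : V) : ⨂[k]^(m+1) V :=
  mulPow k V m 1 (w ⊗ₜ[k] toPow1 v)

/-- `v ⊗ w ∈ V^{⊗(m+1)}` for `v ∈ V`, `w ∈ V^{⊗m}`. -/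
noncomputable def prepend {m : ℕ} (v : V) (w : ⨂[k]^m V) : ⨂[k]^(m+1) V :=
  TensorPower.cast k V (Nat.add_comm 1 m) (mulPow k V 1 m (toPow1 v ⊗ₜ[k] w))

/-- The elements `r_{i_1 i_2 ⋯ i_m} ∈ V^{⊗m}`:
`r_{i_1 i_2} = x_{i_1} ⊗ x_{i_2} − x_{i_2} ⊗ x_{i_1}` and, recursively for `m ≥ 3`,
`r_{i_1 ⋯ i_m} = ∑_{j=1}^{m} (−1)^{m−j} r_{i_1 ⋯ î_j ⋯ i_m} ⊗ x_{i_j}`.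
(For a single index we set `r_i = x_i`, which is the convention making the left-handed
expansion hold also for `m = 2`.) -/
noncomputable def rElt {n : ℕ} (x : Fin n → V) : (m : ℕ) → (Fin m → Fin n) → ⨂[k]^m V
  | 0, _ => 0
  | 1, ι => toPow1 (x (ι 0))
  | 2, ι => append (toPow1 (x (ι 0))) (x (ι 1)) - append (toPow1 (x (ι 1))) (x (ι 0))
  | (m+3), ι => ∑ j : Fin (m+3),
      ((-1 : k)^((m+2) - (j : ℕ))) • append (rElt x (m+2) (ι ∘ j.succAbove)) (x (ι j))

end OrePaper

/-!
Adjacent transpositions generate the symmetric group, so it suffices to show that swapping two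
neighbouring indices negates `r`. This goes by induction on the length: in the recursive
expansion of `r_{i_1 ⋯ i_m}`, swapping positions `p` and `p + 1` exchanges the summands
`j = p` and `j = p + 1` up to the sign change of `(−1)^{m−j}`, and negates every other summand
by the induction hypothesis applied to `r_{i_1 ⋯ î_j ⋯ i_m}`.
-/

theorem comp_perm_eq_sign_smul_of_comp_swap_castSucc_succ {N : ℕ} {α W : Type*}
    [AddCommGroup W] (f : (Fin (N + 1) → α) → W)
    (hf : ∀ ι (i : Fin N), f (ι ∘ Equiv.swap i.castSucc i.succ) = -f ι)
    (π : Equiv.Perm (Fin (N + 1))) (ι : Fin (N + 1) → α) :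
    f (ι ∘ π) = (Equiv.Perm.sign π : ℤ) • f ι := by
  have hπ : π ∈ Submonoid.closure (Set.range fun i : Fin N ↦ Equiv.swap i.castSucc i.succ) := by
    rw [Equiv.Perm.mclosure_swap_castSucc_succ]; trivial
  induction hπ using Submonoid.closure_induction generalizing ι with
  | mem _ hσ =>
    obtain ⟨i, rfl⟩ := hσ
    rw [hf, Equiv.Perm.sign_swap Fin.castSucc_lt_succ.ne]
    simp
  | one => simp
  | mul σ τ _ _ hσ hτ =>
    rw [Equiv.Perm.coe_mul, ← Function.comp_assoc, hτ, hσ, Equiv.Perm.sign_mul, mul_comm,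
      Units.val_mul, mul_smul]

theorem Fin.swap_castSucc_succ_comp_succAbove_castSucc {N : ℕ} (i : Fin N) :
    Equiv.swap i.castSucc i.succ ∘ i.castSucc.succAbove = i.succ.succAbove := by
  funext k
  rcases lt_trichotomy k i with hk | rfl | hk
  · rw [Function.comp_apply, Fin.succAbove_castSucc_of_lt _ _ hk,
      Fin.succAbove_succ_of_le _ _ hk.le, Equiv.swap_apply_of_ne_of_ne (by simpa using hk.ne)
      (Fin.castSucc_lt_succ_iff.2 hk.le).ne]
  · simp
  · rw [Function.comp_apply, Fin.succAbove_castSucc_of_le _ _ hk.le,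
      Fin.succAbove_succ_of_lt _ _ hk, Equiv.swap_apply_of_ne_of_ne
      (Fin.castSucc_lt_succ_iff.2 hk.le).ne' (by simpa using hk.ne')]

namespace OrePaper

variable {k : Type*} [Field k] {V : Type*} [AddCommGroup V] [Module k V]

lemma append_neg {m : ℕ} (w : ⨂[k]^m V) (v : V) : append (-w) v = -append w v := by
  simp [append, TensorProduct.neg_tmul]

section
variable {n : ℕ} (x : Fin n → V)

noncomputable def rEltTerm (m : ℕ) (ι : Fin (m + 3) → Fin n) (j : Fin (m + 3)) :
    ⨂[k]^(m + 3) V :=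
  (-1 : k) ^ (m + 2 - (j : ℕ)) •
    append (rElt (k := k) x (m + 2) (ι ∘ j.succAbove)) (x (ι j))

lemma rElt_add_three (m : ℕ) (ι : Fin (m + 3) → Fin n) :
    rElt (k := k) x (m + 3) ι = ∑ j, rEltTerm (k := k) x m ι j :=
  rfl

lemma rEltTerm_comp_swap_castSucc (m : ℕ) (ι : Fin (m + 3) → Fin n) (i : Fin (m + 2)) :
    rEltTerm (k := k) x m (ι ∘ Equiv.swap i.castSucc i.succ) i.castSucc =
      -rEltTerm (k := k) x m ι i.succ := by
  have hexp : m + 2 - (i.castSucc : ℕ) = m + 2 - (i.succ : ℕ) + 1 := by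
    simp only [Fin.val_castSucc, Fin.val_succ]; omega
  rw [rEltTerm, rEltTerm, Function.comp_assoc, Fin.swap_castSucc_succ_comp_succAbove_castSucc,
    Function.comp_apply, Equiv.swap_apply_left, hexp, pow_succ, mul_neg_one, neg_smul]

lemma rEltTerm_comp_swap_succ (m : ℕ) (ι : Fin (m + 3) → Fin n) (i : Fin (m + 2)) :
    rEltTerm (k := k) x m (ι ∘ Equiv.swap i.castSucc i.succ) i.succ =
      -rEltTerm (k := k) x m ι i.castSucc := by
  have := rEltTerm_comp_swap_castSucc (k := k) x m (ι ∘ Equiv.swap i.castSucc i.succ) i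
  rw [Function.comp_assoc, ← Equiv.Perm.coe_mul, Equiv.swap_mul_self, Equiv.Perm.coe_one,
    Function.comp_id] at this
  rw [this, neg_neg]

lemma rEltTerm_comp_swap_of_ne (m : ℕ)
    (hm : ∀ (ι : Fin (m + 2) → Fin n) (π : Equiv.Perm (Fin (m + 2))),
      rElt (k := k) x (m + 2) (ι ∘ π) = (Equiv.Perm.sign π : ℤ) • rElt (k := k) x (m + 2) ι)
    (ι : Fin (m + 3) → Fin n) {p q j : Fin (m + 3)} (hpq : p ≠ q) (hp : j ≠ p)
    (hq : j ≠ q) :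
    rEltTerm (k := k) x m (ι ∘ Equiv.swap p q) j = -rEltTerm (k := k) x m ι j := by
  obtain ⟨p', rfl⟩ := Fin.exists_succAbove_eq hp.symm
  obtain ⟨q', rfl⟩ := Fin.exists_succAbove_eq hq.symm
  have hpq' : p' ≠ q' := ne_of_apply_ne _ hpq
  rw [rEltTerm, rEltTerm, Function.comp_assoc, Fin.succAbove_right_injective.swap_comp,
    ← Function.comp_assoc, hm, Equiv.Perm.sign_swap hpq', Function.comp_apply,
    Equiv.swap_apply_of_ne_of_ne hp hq]
  simp [append_neg]

lemma rElt_add_three_comp_swap_castSucc_succ (m : ℕ)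
    (hm : ∀ (ι : Fin (m + 2) → Fin n) (π : Equiv.Perm (Fin (m + 2))),
      rElt (k := k) x (m + 2) (ι ∘ π) = (Equiv.Perm.sign π : ℤ) • rElt (k := k) x (m + 2) ι)
    (ι : Fin (m + 3) → Fin n) (i : Fin (m + 2)) :
    rElt (k := k) x (m + 3) (ι ∘ Equiv.swap i.castSucc i.succ) =
      -rElt (k := k) x (m + 3) ι := by
  rw [rElt_add_three, rElt_add_three, ← Finset.sum_neg_distrib]
  refine Fintype.sum_equiv (Equiv.swap i.castSucc i.succ) _ _ fun j ↦ ?_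
  by_cases h₁ : j = i.castSucc
  · rw [h₁, Equiv.swap_apply_left, rEltTerm_comp_swap_castSucc]
  by_cases h₂ : j = i.succ
  · rw [h₂, Equiv.swap_apply_right, rEltTerm_comp_swap_succ]
  rw [Equiv.swap_apply_of_ne_of_ne h₁ h₂,
    rEltTerm_comp_swap_of_ne x m hm ι Fin.castSucc_lt_succ.ne h₁ h₂]

lemma rElt_two_comp_swap (ι : Fin 2 → Fin n) :
    rElt (k := k) x 2 (ι ∘ Equiv.swap 0 1) = -rElt (k := k) x 2 ι := by
  simp only [rElt, Function.comp_apply, Equiv.swap_apply_left, Equiv.swap_apply_right]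
  abel

theorem rElt_comp_perm (m : ℕ) (ι : Fin (m + 2) → Fin n) (π : Equiv.Perm (Fin (m + 2))) :
    rElt (k := k) x (m + 2) (ι ∘ π) = (Equiv.Perm.sign π : ℤ) • rElt (k := k) x (m + 2) ι := by
  induction m with
  | zero =>
    refine comp_perm_eq_sign_smul_of_comp_swap_castSucc_succ _ (fun ι i ↦ ?_) π ι
    rw [Subsingleton.elim i 0]
    exact rElt_two_comp_swap x ι
  | succ m ih =>
    exact comp_perm_eq_sign_smul_of_comp_swap_castSucc_succ _
      (rElt_add_three_comp_swap_castSucc_succ x m ih) π ι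

end

theorem lemma_4_2_d_general {n : ℕ} (b : Module.Basis (Fin n) k V)
    (m : ℕ) (ι : Fin (m+2) → Fin n) (π : Equiv.Perm (Fin (m+2))) :
    rElt (k := k) (fun i => b i) (m+2) (ι ∘ π)
      = (Equiv.Perm.sign π : ℤ) • rElt (k := k) (fun i => b i) (m+2) ι :=
  rElt_comp_perm _ m ι π

/-- **Lemma 4.2(d)**: `r_{i_{π(1)} ⋯ i_{π(m)}} = sgn(π) · r_{i_1 ⋯ i_m}` for every
permutation `π` of the index positions. -/
theorem lemma_4_2_d {n : ℕ} (hn : 2 ≤ n) (b : Module.Basis (Fin n) k V)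
    (m : ℕ) (ι : Fin (m+2) → Fin n) (π : Equiv.Perm (Fin (m+2))) :
    rElt (k := k) (fun i => b i) (m+2) (ι ∘ π)
      = (Equiv.Perm.sign π : ℤ) • rElt (k := k) (fun i => b i) (m+2) ι :=
  lemma_4_2_d_general b m ι π

end OrePaper
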